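/- Conversely, suppose 2×2 matrices U, V satisfy (U − ζA)(V − ζB) = (Y − ζB)(X − ζA) for all ζ and det(U − ζA) = det(X − ζA) for all ζ (with A, B invertible, AB = BA, and Π₁(X,Y) invertible). Then U = Π₂(X,Y)Π₁(X,Y)⁻¹A and V = A⁻¹(YA + BX − UB). -/

import Mathlib

open Matrix

/-- `f₁(X;A) = a₂₂x₁₁ − a₂₁x₁₂ − a₁₂x₂₁ + a₁₁x₂₂`. -/
def f1 (X A : Matrix (Fin 2) (Fin 2) ℂ) : ℂ :=
  A 1 1 * X 0 0 - A 1 0 * X 0 1 - A 0 1 * X 1 0 + A 0 0 * X 1 1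

/-!
Evaluating the two hypotheses at `ζ = 0` and `ζ = 1` gives `UV = YX`,
`UB + AV = YA + BX`, `det U = det X` and `tr (U adj A) = tr (X adj A)`. With `W = UA⁻¹` the
first two give `W (YA + BX) = W² AB + YX`, and Cayley–Hamilton `W² = tr W • W - det W • 1`,
where `det A • tr W = f₁(X;A)` and `det A • det W = det X`, turns this into
`W Π₁(X,Y) = Π₂(X,Y)`. Then `U = W A`, and `V` is read off from `AV = YA + BX - UB`.
-/

theorem mul_eq_and_mul_add_mul_eq_of_forall_sub_smul_mul {K R : Type*} [Semiring K] [Ring R]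
    [Module K R] {A B U V X Y : R} (hAB : A * B = B * A)
    (h : ∀ ζ : K, (U - ζ • A) * (V - ζ • B) = (Y - ζ • B) * (X - ζ • A)) :
    U * V = Y * X ∧ U * B + A * V = Y * A + B * X := by
  have h0 := h 0
  have h1 := h 1
  simp only [zero_smul, sub_zero, one_smul] at h0 h1
  refine ⟨h0, ?_⟩
  have hsum : Y * X - (U * B + A * V) + B * A = Y * X - (Y * A + B * X) + B * A :=
    calc Y * X - (U * B + A * V) + B * A
        = U * V - (U * B + A * V) + A * B := by rw [h0, hAB]
      _ = (U - A) * (V - B) := by noncomm_ring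
      _ = (Y - B) * (X - A) := h1
      _ = Y * X - (Y * A + B * X) + B * A := by noncomm_ring
  exact sub_right_injective (add_right_cancel hsum)

namespace Matrix

variable {R : Type*} [CommRing R]

theorem det_sub_fin_two (X A : Matrix (Fin 2) (Fin 2) R) :
    (X - A).det = X.det - trace (X * adjugate A) + A.det := by
  simp only [det_fin_two, trace_fin_two, adjugate_fin_two, mul_apply, Fin.sum_univ_two, sub_apply,
    of_apply, cons_val', cons_val_zero, cons_val_one, empty_val', cons_val_fin_one]
  ring

theorem det_eq_and_trace_mul_adjugate_eq_of_forall_det_sub_smul {A U X : Matrix (Fin 2) (Fin 2) R}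
    (h : ∀ ζ : R, (U - ζ • A).det = (X - ζ • A).det) :
    U.det = X.det ∧ trace (U * adjugate A) = trace (X * adjugate A) := by
  have h0 := h 0
  have h1 := h 1
  simp only [zero_smul, sub_zero, one_smul, det_sub_fin_two] at h0 h1
  exact ⟨h0, by linear_combination h0 - h1⟩

theorem sq_eq_trace_smul_sub_det_smul_one (M : Matrix (Fin 2) (Fin 2) R) :
    M ^ 2 = trace M • M - det M • (1 : Matrix (Fin 2) (Fin 2) R) := by
  nontriviality R
  have := M.aeval_self_charpoly
  rw [charpoly_fin_two] at this
  simp only [map_add, map_sub, map_mul, map_pow, Polynomial.aeval_X, Polynomial.aeval_C,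
    Algebra.algebraMap_eq_smul_one] at this
  rw [← sub_eq_zero, ← this, smul_one_mul]
  abel

theorem adjugate_eq_det_smul_inv {n : Type*} [Fintype n] [DecidableEq n] {A : Matrix n n R}
    (hA : IsUnit A.det) : adjugate A = A.det • A⁻¹ := by
  rw [inv_def, smul_smul, Ring.mul_inverse_cancel _ hA, one_smul]

theorem mul_inv_mul_add_mul_eq {n : Type*} [Fintype n] [DecidableEq n]
    {A B U V X Y : Matrix n n R} (hA : IsUnit A.det) (h0 : U * V = Y * X)
    (hlin : U * B + A * V = Y * A + B * X) :
    U * A⁻¹ * (Y * A + B * X) = (U * A⁻¹) ^ 2 * (A * B) + Y * X := by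
  have hAA : A⁻¹ * A = 1 := nonsing_inv_mul A hA
  rw [← hlin, ← h0, sq]
  simp only [mul_add, Matrix.mul_assoc]
  rw [← Matrix.mul_assoc A⁻¹ A, hAA, Matrix.one_mul, ← Matrix.mul_assoc A⁻¹ A, hAA,
    Matrix.one_mul]

theorem mul_inv_mul_det_smul_sub_trace_smul_eq {A B U V X Y : Matrix (Fin 2) (Fin 2) R}
    (hA : IsUnit A.det) (h0 : U * V = Y * X) (hlin : U * B + A * V = Y * A + B * X)
    (hdet : U.det = X.det) (htr : trace (U * adjugate A) = trace (X * adjugate A)) :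
    U * A⁻¹ * (A.det • (Y * A + B * X) - trace (X * adjugate A) • (A * B)) =
      A.det • (Y * X) - X.det • (A * B) := by
  set W := U * A⁻¹
  have htrW : A.det * trace W = trace (X * adjugate A) := by
    rw [← htr, adjugate_eq_det_smul_inv hA, Matrix.mul_smul, trace_smul, smul_eq_mul]
  have hdetW : A.det * det W = X.det := by
    rw [← hdet, det_mul, det_nonsing_inv, mul_left_comm, Ring.mul_inverse_cancel _ hA, mul_one]
  rw [mul_sub, Matrix.mul_smul, Matrix.mul_smul, mul_inv_mul_add_mul_eq hA h0 hlin,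
    sq_eq_trace_smul_sub_det_smul_one, ← htrW, ← hdetW]
  simp only [sub_mul, Matrix.smul_mul, Matrix.one_mul, smul_add, smul_sub, smul_smul]
  abel

end Matrix

theorem f1_eq_trace_mul_adjugate (X A : Matrix (Fin 2) (Fin 2) ℂ) :
    f1 X A = trace (X * adjugate A) := by
  simp only [f1, trace_fin_two, adjugate_fin_two, mul_apply, Fin.sum_univ_two, of_apply,
    cons_val', cons_val_zero, cons_val_one, empty_val', cons_val_fin_one]
  ring

theorem stmt3_general (A B X Y U V : Matrix (Fin 2) (Fin 2) ℂ)
    (hA : IsUnit A) (hAB : A * B = B * A)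
    (hP : IsUnit (A.det • (Y * A + B * X) - f1 X A • (A * B)))
    (hfact : ∀ ζ : ℂ, (U - ζ • A) * (V - ζ • B) = (Y - ζ • B) * (X - ζ • A))
    (hdet : ∀ ζ : ℂ, (U - ζ • A).det = (X - ζ • A).det) :
    U = (A.det • (Y * X) - X.det • (A * B)) *
          (A.det • (Y * A + B * X) - f1 X A • (A * B))⁻¹ * A ∧
    V = A⁻¹ * (Y * A + B * X - U * B) := by
  have hAd : IsUnit A.det := (isUnit_iff_isUnit_det A).mp hA
  obtain ⟨h0, hlin⟩ := mul_eq_and_mul_add_mul_eq_of_forall_sub_smul_mul hAB hfact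
  obtain ⟨hdetU, htr⟩ := det_eq_and_trace_mul_adjugate_eq_of_forall_det_sub_smul hdet
  have hW := mul_inv_mul_det_smul_sub_trace_smul_eq hAd h0 hlin hdetU htr
  rw [← f1_eq_trace_mul_adjugate] at hW
  constructor
  · rw [← hW, Matrix.mul_assoc (U * A⁻¹), mul_nonsing_inv _ ((isUnit_iff_isUnit_det _).mp hP),
      Matrix.mul_one, Matrix.mul_assoc, nonsing_inv_mul A hAd, Matrix.mul_one]
  · rw [← hlin, add_sub_cancel_left, ← Matrix.mul_assoc, nonsing_inv_mul A hAd, Matrix.one_mul]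

theorem stmt3 (A B X Y U V : Matrix (Fin 2) (Fin 2) ℂ)
    (hA : IsUnit A) (hB : IsUnit B) (hAB : A * B = B * A)
    (hP : IsUnit (A.det • (Y * A + B * X) - f1 X A • (A * B)))
    (hfact : ∀ ζ : ℂ, (U - ζ • A) * (V - ζ • B) = (Y - ζ • B) * (X - ζ • A))
    (hdet : ∀ ζ : ℂ, (U - ζ • A).det = (X - ζ • A).det) :
    U = (A.det • (Y * X) - X.det • (A * B)) *
          (A.det • (Y * A + B * X) - f1 X A • (A * B))⁻¹ * A ∧
    V = A⁻¹ * (Y * A + B * X - U * B) :=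
  stmt3_general A B X Y U V hA hAB hP hfact hdet
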